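/- arXiv:2308.13214 — 3 statements merged into one kernel-verified Lean document; each statement's English description precedes it below -/
import Mathlib

section
/- Assume the Arnoldi hypotheses through step k for A ∈ ℍ^{n×n} and V₁ ∈ ℍ^{n×m} with ‖V₁‖ = 1. Then the block system {V₁, …, V_k} is orthonormal, i.e. tr(V_i^* V_j) = δ_{ij} for all 1 ≤ i, j ≤ k, and for every j ≤ k the right span of {V₁, …, V_j} over ℍ equals the right span of {V₁, A V₁, …, A^{j−1} V₁} over ℍ; in particular {V₁, …, V_k} is an orthonormal basis of the quaternion matrix Krylov subspace 𝒦_k(A, V₁) = span{V₁, A V₁, …, A^{k−1} V₁}. -/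
open Matrix Quaternion

noncomputable section

/-- Entrywise right scalar multiple of a quaternion matrix. -/
def qsmul {n m : ℕ} (X : Matrix (Fin n) (Fin m) ℍ[ℝ]) (a : ℍ[ℝ]) :
    Matrix (Fin n) (Fin m) ℍ[ℝ] := fun i j => X i j * a

/-- Frobenius norm of a quaternion matrix: `‖X‖ = (Re tr(X^* X))^{1/2}`. -/
def qnorm {n m : ℕ} (X : Matrix (Fin n) (Fin m) ℍ[ℝ]) : ℝ :=
  Real.sqrt (Matrix.trace (Xᴴ * X)).re

/-- The Arnoldi hypotheses through step `k` for `A ∈ ℍ^{n×n}` and `V 1 ∈ ℍ^{n×m}` with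
`‖V 1‖ = 1`: for each `j = 1, …, k`, `h i j = tr(V_i^* (A V_j))` for `i ≤ j`,
`h (j+1) j = ‖A V_j − Σ_{i=1}^j V_i h_{i,j}‖ ≠ 0`, and
`V (j+1) = (A V_j − Σ_{i=1}^j V_i h_{i,j}) · h_{j+1,j}⁻¹`. -/
structure ArnoldiData (n m k : ℕ) (A : Matrix (Fin n) (Fin n) ℍ[ℝ])
    (V : ℕ → Matrix (Fin n) (Fin m) ℍ[ℝ]) (h : ℕ → ℕ → ℍ[ℝ]) : Prop where
  normV1 : qnorm (V 1) = 1
  hdef : ∀ j ∈ Finset.Icc 1 k, ∀ i ∈ Finset.Icc 1 j,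
      h i j = Matrix.trace ((V i)ᴴ * (A * V j))
  hsub : ∀ j ∈ Finset.Icc 1 k,
      h (j+1) j = (qnorm (A * V j - ∑ i ∈ Finset.Icc 1 j, qsmul (V i) (h i j)) : ℍ[ℝ])
  hsub_ne : ∀ j ∈ Finset.Icc 1 k, h (j+1) j ≠ 0
  vdef : ∀ j ∈ Finset.Icc 1 k,
      V (j+1) = qsmul (A * V j - ∑ i ∈ Finset.Icc 1 j, qsmul (V i) (h i j)) (h (j+1) j)⁻¹

/-!
The block Gram–Schmidt step makes `W_j = A V_j − Σ_{i ≤ j} V_i h_{i,j}` orthogonal to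
`V_1, …, V_j` for the quaternion-valued inner product `tr(Y^* X)`, because `h_{i,j}` is exactly
the `V_i`-coefficient of `A V_j`; dividing by the positive real `‖W_j‖` normalises it. For the
spans, right multiples by quaternions are the scalar action of `ℍᵐᵒᵖ`, so both sides are
`ℍᵐᵒᵖ`-submodules, and left multiplication by `A` is `ℍᵐᵒᵖ`-linear. The Arnoldi relation
`A V_l = V_{l+1} h_{l+1,l} + Σ_{i ≤ l} V_i h_{i,l}` and the definition of `V_{l+1}` then give
`A^{l} V_1 ∈ span{V_1, …, V_{l+1}}` and `V_l ∈ span{V_1, …, A^{l-1} V_1}` by induction.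
-/

section Orthonormal

variable {ι p q R : Type*} [Fintype p] [Fintype q] [Ring R] [StarRing R] [DecidableEq ι]

theorem star_trace_conjTranspose_mul (X Y : Matrix p q R) :
    star (Matrix.trace (Xᴴ * Y)) = Matrix.trace (Yᴴ * X) := by
  rw [← Matrix.trace_conjTranspose, Matrix.conjTranspose_mul, Matrix.conjTranspose_conjTranspose]

def IsOrthonormalOn (V : ι → Matrix p q R) (s : Finset ι) : Prop :=
  ∀ i ∈ s, ∀ j ∈ s, Matrix.trace ((V i)ᴴ * V j) = if i = j then 1 else 0

theorem IsOrthonormalOn.insert {V : ι → Matrix p q R} {s : Finset ι} {a : ι}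
    (hV : IsOrthonormalOn V s) (hperp : ∀ i ∈ s, Matrix.trace ((V i)ᴴ * V a) = 0)
    (hunit : Matrix.trace ((V a)ᴴ * V a) = 1) : IsOrthonormalOn V (insert a s) := by
  have hperp' : ∀ i ∈ s, Matrix.trace ((V a)ᴴ * V i) = 0 := fun i hi => by
    rw [← star_trace_conjTranspose_mul, hperp i hi, star_zero]
  intro i hi j hj
  nontriviality R
  have hne : ∀ i ∈ s, i ≠ a := fun i hi e => by
    have := hperp i hi
    rw [e, hunit] at this
    exact one_ne_zero this
  rw [Finset.mem_insert] at hi hj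
  rcases hi with rfl | hi <;> rcases hj with rfl | hj
  · simpa using hunit
  · rw [hperp' j hj, if_neg (hne j hj).symm]
  · rw [hperp i hi, if_neg (hne i hi)]
  · exact hV i hi j hj

end Orthonormal

section QuaternionMatrix

variable {n m : ℕ}

theorem op_smul_eq_qsmul (X : Matrix (Fin n) (Fin m) ℍ[ℝ]) (a : ℍ[ℝ]) :
    MulOpposite.op a • X = qsmul X a := by
  funext i j
  simp [qsmul, MulOpposite.smul_eq_mul_unop]

theorem qsmul_qsmul (X : Matrix (Fin n) (Fin m) ℍ[ℝ]) (a b : ℍ[ℝ]) :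
    qsmul (qsmul X a) b = qsmul X (a * b) := by
  funext i j
  simp [qsmul, mul_assoc]

theorem qsmul_one (X : Matrix (Fin n) (Fin m) ℍ[ℝ]) : qsmul X 1 = X := by
  funext i j
  simp [qsmul]

theorem qsmul_mem {P : Submodule ℍ[ℝ]ᵐᵒᵖ (Matrix (Fin n) (Fin m) ℍ[ℝ])}
    {X : Matrix (Fin n) (Fin m) ℍ[ℝ]} (hX : X ∈ P) (a : ℍ[ℝ]) : qsmul X a ∈ P :=
  op_smul_eq_qsmul X a ▸ P.smul_mem _ hX

theorem trace_conjTranspose_mul_qsmul (X Y : Matrix (Fin n) (Fin m) ℍ[ℝ]) (a : ℍ[ℝ]) :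
    Matrix.trace (Xᴴ * qsmul Y a) = Matrix.trace (Xᴴ * Y) * a := by
  simp [Matrix.trace, Matrix.mul_apply, qsmul, Finset.sum_mul, mul_assoc]

theorem trace_conjTranspose_qsmul_mul (X Y : Matrix (Fin n) (Fin m) ℍ[ℝ]) (a : ℍ[ℝ]) :
    Matrix.trace ((qsmul X a)ᴴ * Y) = star a * Matrix.trace (Xᴴ * Y) := by
  simp [Matrix.trace, Matrix.mul_apply, qsmul, Finset.mul_sum, mul_assoc]

theorem trace_conjTranspose_mul_self (X : Matrix (Fin n) (Fin m) ℍ[ℝ]) :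
    Matrix.trace (Xᴴ * X) = ((qnorm X ^ 2 : ℝ) : ℍ[ℝ]) := by
  have hsum : Matrix.trace (Xᴴ * X) = ((∑ i, ∑ l, normSq (X l i) : ℝ) : ℍ[ℝ]) := by
    simp only [Matrix.trace, Matrix.diag, Matrix.mul_apply, Matrix.conjTranspose_apply,
      Quaternion.star_mul_self, ← Quaternion.algebraMap_def, map_sum]
  have hnonneg : (0 : ℝ) ≤ ∑ i, ∑ l, normSq (X l i) :=
    Finset.sum_nonneg fun _ _ => Finset.sum_nonneg fun _ _ => normSq_nonneg
  rw [hsum, qnorm, hsum, Quaternion.re_coe, Real.sq_sqrt hnonneg]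

theorem trace_conjTranspose_mul_self_qsmul_inv_qnorm {X : Matrix (Fin n) (Fin m) ℍ[ℝ]}
    (hX : qnorm X ≠ 0) :
    Matrix.trace ((qsmul X (qnorm X : ℍ[ℝ])⁻¹)ᴴ * qsmul X (qnorm X : ℍ[ℝ])⁻¹) = 1 := by
  rw [trace_conjTranspose_qsmul_mul, trace_conjTranspose_mul_qsmul, trace_conjTranspose_mul_self,
    ← Quaternion.coe_inv, Quaternion.star_coe, ← Quaternion.coe_mul, ← Quaternion.coe_mul,
    ← Quaternion.coe_one]
  congr 1
  field_simp

theorem trace_conjTranspose_mul_sub_sum_qsmul {V : ℕ → Matrix (Fin n) (Fin m) ℍ[ℝ]}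
    {s : Finset ℕ} (hV : IsOrthonormalOn V s) (Y : Matrix (Fin n) (Fin m) ℍ[ℝ]) {p : ℕ}
    (hp : p ∈ s) :
    Matrix.trace ((V p)ᴴ * (Y - ∑ i ∈ s, qsmul (V i) (Matrix.trace ((V i)ᴴ * Y)))) = 0 := by
  have hcoeff : ∑ i ∈ s, Matrix.trace ((V p)ᴴ * qsmul (V i) (Matrix.trace ((V i)ᴴ * Y))) =
      Matrix.trace ((V p)ᴴ * Y) := by
    simp only [trace_conjTranspose_mul_qsmul]
    rw [Finset.sum_eq_single_of_mem p hp fun i hi hip => by rw [hV p hp i hi, if_neg hip.symm,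
      zero_mul], hV p hp p hp, if_pos rfl, one_mul]
  rw [Matrix.mul_sub, Matrix.trace_sub, Matrix.mul_sum, Matrix.trace_sum, hcoeff, sub_self]

theorem setOf_exists_eq_sum_qsmul {j : ℕ} (v : Fin j → Matrix (Fin n) (Fin m) ℍ[ℝ]) :
    {X | ∃ α : Fin j → ℍ[ℝ], X = ∑ i, qsmul (v i) (α i)} =
      (Submodule.span ℍ[ℝ]ᵐᵒᵖ (Set.range v) : Set (Matrix (Fin n) (Fin m) ℍ[ℝ])) := by
  ext X
  simp only [Set.mem_ofPred_eq, SetLike.mem_coe, Submodule.mem_span_range_iff_exists_fun]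
  constructor
  · rintro ⟨α, rfl⟩
    exact ⟨fun i => MulOpposite.op (α i), by simp only [op_smul_eq_qsmul]⟩
  · rintro ⟨c, rfl⟩
    exact ⟨fun i => (c i).unop, by simp only [← op_smul_eq_qsmul, MulOpposite.op_unop]⟩

end QuaternionMatrix

section Krylov

variable {n m : ℕ}

theorem range_fin_eq_image_Iio {α : Type*} (u : ℕ → α) (j : ℕ) :
    Set.range (fun i : Fin j => u i) = u '' Set.Iio j := by
  rw [← Fin.range_val, ← Set.range_comp]
  rfl

theorem range_fin_add_one_eq_image_Icc {α : Type*} (u : ℕ → α) (j : ℕ) :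
    Set.range (fun i : Fin j => u (i + 1)) = u '' Set.Icc 1 j := by
  ext x
  constructor
  · rintro ⟨i, rfl⟩
    exact ⟨i + 1, ⟨by omega, by omega⟩, rfl⟩
  · rintro ⟨l, ⟨hl1, hlj⟩, rfl⟩
    exact ⟨⟨l - 1, by omega⟩, by simp only [Nat.sub_add_cancel hl1]⟩

theorem mul_mem_of_mem_span {A : Matrix (Fin n) (Fin n) ℍ[ℝ]}
    {s : Set (Matrix (Fin n) (Fin m) ℍ[ℝ])} {P : Submodule ℍ[ℝ]ᵐᵒᵖ (Matrix (Fin n) (Fin m) ℍ[ℝ])}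
    (hs : ∀ Y ∈ s, A * Y ∈ P) {Y : Matrix (Fin n) (Fin m) ℍ[ℝ]}
    (hY : Y ∈ Submodule.span ℍ[ℝ]ᵐᵒᵖ s) : A * Y ∈ P :=
  (Submodule.span_le (p := P.comap (mulLeftLinearMap (Fin m) ℍ[ℝ]ᵐᵒᵖ A))).mpr hs hY

def krylov (A : Matrix (Fin n) (Fin n) ℍ[ℝ]) (X : Matrix (Fin n) (Fin m) ℍ[ℝ]) (j : ℕ) :
    Submodule ℍ[ℝ]ᵐᵒᵖ (Matrix (Fin n) (Fin m) ℍ[ℝ]) :=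
  Submodule.span ℍ[ℝ]ᵐᵒᵖ ((fun i => A ^ i * X) '' Set.Iio j)

variable {A : Matrix (Fin n) (Fin n) ℍ[ℝ]} {X : Matrix (Fin n) (Fin m) ℍ[ℝ]}

theorem krylov_mono {j j' : ℕ} (hj : j ≤ j') : krylov A X j ≤ krylov A X j' :=
  Submodule.span_mono (Set.image_mono (Set.Iio_subset_Iio hj))

theorem pow_mul_mem_krylov {i j : ℕ} (hi : i < j) : A ^ i * X ∈ krylov A X j :=
  Submodule.subset_span ⟨i, hi, rfl⟩

theorem mul_mem_krylov_succ {j : ℕ} {Y : Matrix (Fin n) (Fin m) ℍ[ℝ]} (hY : Y ∈ krylov A X j) :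
    A * Y ∈ krylov A X (j + 1) := by
  refine mul_mem_of_mem_span ?_ hY
  rintro _ ⟨i, hi, rfl⟩
  rw [← Matrix.mul_assoc, ← pow_succ']
  exact pow_mul_mem_krylov (Nat.succ_lt_succ hi)

end Krylov

namespace ArnoldiData

variable {n m k : ℕ} {A : Matrix (Fin n) (Fin n) ℍ[ℝ]} {V : ℕ → Matrix (Fin n) (Fin m) ℍ[ℝ]}
  {h : ℕ → ℕ → ℍ[ℝ]}

theorem qnorm_residual_ne_zero (hA : ArnoldiData n m k A V h) {j : ℕ} (hj : j ∈ Finset.Icc 1 k) :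
    qnorm (A * V j - ∑ i ∈ Finset.Icc 1 j, qsmul (V i) (h i j)) ≠ 0 := fun h0 =>
  hA.hsub_ne j hj (by rw [hA.hsub j hj, h0, Quaternion.coe_zero])

theorem trace_conjTranspose_mul_self_succ (hA : ArnoldiData n m k A V h) {j : ℕ} (hj : j ≤ k) :
    Matrix.trace ((V (j + 1))ᴴ * V (j + 1)) = 1 := by
  rcases Nat.eq_zero_or_pos j with rfl | hj1
  · rw [trace_conjTranspose_mul_self, hA.normV1]
    norm_num
  · have hjk : j ∈ Finset.Icc 1 k := Finset.mem_Icc.mpr ⟨hj1, hj⟩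
    rw [hA.vdef j hjk, hA.hsub j hjk]
    exact trace_conjTranspose_mul_self_qsmul_inv_qnorm (hA.qnorm_residual_ne_zero hjk)

theorem isOrthonormalOn_Icc (hA : ArnoldiData n m k A V h) :
    ∀ j ≤ k + 1, IsOrthonormalOn V (Finset.Icc 1 j) := by
  intro j
  induction j with
  | zero => simp [IsOrthonormalOn]
  | succ j ih =>
    intro hj
    rw [← Finset.insert_Icc_right_eq_Icc_add_one (by omega)]
    refine (ih (by omega)).insert (fun p hp => ?_) (hA.trace_conjTranspose_mul_self_succ (by omega))
    have hjk : j ∈ Finset.Icc 1 k := by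
      simp only [Finset.mem_Icc] at hp ⊢
      omega
    have hcoeff : ∑ i ∈ Finset.Icc 1 j, qsmul (V i) (h i j) =
        ∑ i ∈ Finset.Icc 1 j, qsmul (V i) (Matrix.trace ((V i)ᴴ * (A * V j))) :=
      Finset.sum_congr rfl fun i hi => by rw [hA.hdef j hjk i hi]
    rw [hA.vdef j hjk, trace_conjTranspose_mul_qsmul, hcoeff,
      trace_conjTranspose_mul_sub_sum_qsmul (ih (by omega)) _ hp, zero_mul]

theorem mul_eq_add_sum (hA : ArnoldiData n m k A V h) {j : ℕ} (hj : j ∈ Finset.Icc 1 k) :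
    A * V j = qsmul (V (j + 1)) (h (j + 1) j) + ∑ i ∈ Finset.Icc 1 j, qsmul (V i) (h i j) := by
  rw [hA.vdef j hj, qsmul_qsmul, inv_mul_cancel₀ (hA.hsub_ne j hj), qsmul_one, sub_add_cancel]

theorem mul_mem_span_Icc_succ (hA : ArnoldiData n m k A V h) {j : ℕ} (hj : j ≤ k)
    {Y : Matrix (Fin n) (Fin m) ℍ[ℝ]} (hY : Y ∈ Submodule.span ℍ[ℝ]ᵐᵒᵖ (V '' Set.Icc 1 j)) :
    A * Y ∈ Submodule.span ℍ[ℝ]ᵐᵒᵖ (V '' Set.Icc 1 (j + 1)) := by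
  have hV : ∀ i ∈ Set.Icc 1 (j + 1), V i ∈ Submodule.span ℍ[ℝ]ᵐᵒᵖ (V '' Set.Icc 1 (j + 1)) :=
    fun i hi => Submodule.subset_span (Set.mem_image_of_mem V hi)
  refine mul_mem_of_mem_span ?_ hY
  rintro _ ⟨l, ⟨hl1, hlj⟩, rfl⟩
  rw [hA.mul_eq_add_sum (Finset.mem_Icc.mpr ⟨hl1, hlj.trans hj⟩)]
  refine add_mem (qsmul_mem (hV _ ⟨by omega, by omega⟩) _) (Submodule.sum_mem _ fun i hi => ?_)
  rw [Finset.mem_Icc] at hi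
  exact qsmul_mem (hV i ⟨hi.1, by omega⟩) _

theorem pow_mul_mem_span_Icc (hA : ArnoldiData n m k A V h) :
    ∀ i ≤ k, A ^ i * V 1 ∈ Submodule.span ℍ[ℝ]ᵐᵒᵖ (V '' Set.Icc 1 (i + 1)) := by
  intro i
  induction i with
  | zero =>
    intro _
    rw [pow_zero, Matrix.one_mul]
    exact Submodule.subset_span (Set.mem_image_of_mem V ⟨le_rfl, le_rfl⟩)
  | succ i ih =>
    intro hi
    rw [pow_succ', Matrix.mul_assoc]
    exact hA.mul_mem_span_Icc_succ (by omega) (ih (by omega))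

theorem krylov_le_span_Icc (hA : ArnoldiData n m k A V h) {j : ℕ} (hj : j ≤ k + 1) :
    krylov A (V 1) j ≤ Submodule.span ℍ[ℝ]ᵐᵒᵖ (V '' Set.Icc 1 j) := by
  rw [krylov, Submodule.span_le]
  rintro _ ⟨i, hi, rfl⟩
  exact Submodule.span_mono (Set.image_mono (Set.Icc_subset_Icc_right hi))
    (hA.pow_mul_mem_span_Icc i (by rw [Set.mem_Iio] at hi; omega))

theorem span_Icc_le_krylov (hA : ArnoldiData n m k A V h) :
    ∀ j ≤ k + 1, Submodule.span ℍ[ℝ]ᵐᵒᵖ (V '' Set.Icc 1 j) ≤ krylov A (V 1) j := by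
  intro j
  induction j with
  | zero => simp
  | succ j ih =>
    intro hj
    have hle : Submodule.span ℍ[ℝ]ᵐᵒᵖ (V '' Set.Icc 1 j) ≤ krylov A (V 1) (j + 1) :=
      (ih (by omega)).trans (krylov_mono j.le_succ)
    rw [← Set.insert_Icc_right_eq_Icc_add_one (by omega), Set.image_insert_eq,
      Submodule.span_insert]
    refine sup_le (Submodule.span_singleton_le_iff_mem _ _ |>.mpr ?_) hle
    rcases Nat.eq_zero_or_pos j with rfl | hj1
    · simpa using pow_mul_mem_krylov (A := A) (X := V 1) zero_lt_one
    have hjk : j ∈ Finset.Icc 1 k := Finset.mem_Icc.mpr ⟨hj1, by omega⟩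
    have hVmem : ∀ i ∈ Finset.Icc 1 j, V i ∈ Submodule.span ℍ[ℝ]ᵐᵒᵖ (V '' Set.Icc 1 j) :=
      fun i hi => Submodule.subset_span (Set.mem_image_of_mem V (by simpa using hi))
    have hAVj : A * V j ∈ krylov A (V 1) (j + 1) :=
      mul_mem_krylov_succ (ih (by omega) (hVmem j (Finset.mem_Icc.mpr ⟨hj1, le_rfl⟩)))
    rw [hA.vdef j hjk]
    exact qsmul_mem (sub_mem hAVj
      (Submodule.sum_mem _ fun i hi => qsmul_mem (hle (hVmem i hi)) _)) _

theorem span_Icc_eq_krylov (hA : ArnoldiData n m k A V h) {j : ℕ} (hj : j ≤ k + 1) :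
    Submodule.span ℍ[ℝ]ᵐᵒᵖ (V '' Set.Icc 1 j) = krylov A (V 1) j :=
  le_antisymm (hA.span_Icc_le_krylov j hj) (hA.krylov_le_span_Icc hj)

end ArnoldiData

/-- Under the Arnoldi hypotheses through step `k`, the block system
`{V₁, …, V_k}` is orthonormal, and for every `j ≤ k` the right span over ℍ of
`{V₁, …, V_j}` equals the right span over ℍ of `{V₁, A V₁, …, A^{j−1} V₁}`; in particular
`{V₁, …, V_k}` is an orthonormal basis of the quaternion matrix Krylov subspace
`𝒦_k(A, V₁)`. -/
theorem global_quaternion_arnoldi_orthonormal_basis (n m k : ℕ)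
    (A : Matrix (Fin n) (Fin n) ℍ[ℝ]) (V : ℕ → Matrix (Fin n) (Fin m) ℍ[ℝ])
    (h : ℕ → ℕ → ℍ[ℝ]) (hA : ArnoldiData n m k A V h) :
    (∀ i ∈ Finset.Icc 1 k, ∀ j ∈ Finset.Icc 1 k,
      Matrix.trace ((V i)ᴴ * V j) = if i = j then (1 : ℍ[ℝ]) else 0) ∧
    (∀ j ∈ Finset.Icc 1 k,
      {X : Matrix (Fin n) (Fin m) ℍ[ℝ] |
          ∃ α : Fin j → ℍ[ℝ], X = ∑ i : Fin j, qsmul (V ((i : ℕ) + 1)) (α i)} =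
      {X : Matrix (Fin n) (Fin m) ℍ[ℝ] |
          ∃ α : Fin j → ℍ[ℝ], X = ∑ i : Fin j, qsmul (A ^ (i : ℕ) * V 1) (α i)}) := by
  refine ⟨hA.isOrthonormalOn_Icc k k.le_succ, fun j hj => ?_⟩
  rw [setOf_exists_eq_sum_qsmul, setOf_exists_eq_sum_qsmul, range_fin_add_one_eq_image_Icc V,
    range_fin_eq_image_Iio (fun i => A ^ i * V 1),
    hA.span_Icc_eq_krylov (by rw [Finset.mem_Icc] at hj; omega), krylov]
end
end

section
/- (Reduction of the Gl-QGMRES minimization to a small least-squares problem.) Let A ∈ ℍ^{n×n}, B, X₀ ∈ ℍ^{n×m}, R₀ := B − A X₀, β := ‖R₀‖ > 0, V₁ := R₀ β^{-1}, and assume the Arnoldi hypotheses through step k; extend h_{i,j} by h_{i,j} := 0 for i > j+1. Then for every y = (y₁, …, y_k) ∈ ℍ^k, ‖B − A(X₀ + Σ_{j=1}^k V_j y_j)‖² = Σ_{i=1}^{k+1} | β δ_{i1} − Σ_{j=1}^k h_{i,j} y_j |², i.e. ‖B − A(X₀ + 𝒱_k * y)‖ = ‖β ē₁ − H̄_k y‖,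 where H̄_k ∈ ℍ^{(k+1)×k} is the rectangular upper Hessenberg matrix with entries h_{i,j} and ē₁ = (1,0,…,0)^T ∈ ℝ^{k+1}. -/
open Matrix Quaternion

noncomputable section

/-!
The Arnoldi matrices `V₁, …, V_{k+1}` are orthonormal for `⟨X, Y⟩ = tr(Y^* X)`, since each
`V_{j+1}` is the normalised Gram–Schmidt residual of `A V_j`, and they satisfy the Arnoldi relation
`A V_j = Σ_{i ≤ k+1} V_i h_{i,j}`. With `R₀ = V₁ β` the residual `B − A(X₀ + 𝒱_k * y)` is therefore
`Σ_i V_i (β δ_{i1} − Σ_j h_{i,j} y_j)`, and Pythagoras for an orthonormal family gives its norm.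
Quaternions do not commute, so scalars act on the right, i.e. as `op a • X` with `a ∈ ℍᵐᵒᵖ`.
-/

open Finset MulOpposite

section

variable {n m : ℕ}

lemma qsmul_eq_op_smul (X : Matrix (Fin n) (Fin m) ℍ[ℝ]) (a : ℍ[ℝ]) :
    qsmul X a = op a • X :=
  rfl

def qinner (X Y : Matrix (Fin n) (Fin m) ℍ[ℝ]) : ℍ[ℝ] := trace (Yᴴ * X)

lemma qinner_op_smul_left (X Y : Matrix (Fin n) (Fin m) ℍ[ℝ]) (a : ℍ[ℝ]) :
    qinner (op a • X) Y = qinner X Y * a := by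
  rw [qinner, qinner, Matrix.mul_smul, trace_smul, op_smul_eq_mul]

lemma star_qinner (X Y : Matrix (Fin n) (Fin m) ℍ[ℝ]) : star (qinner X Y) = qinner Y X := by
  rw [qinner, qinner, ← trace_conjTranspose, conjTranspose_mul, conjTranspose_conjTranspose]

lemma qinner_op_smul_right (X Y : Matrix (Fin n) (Fin m) ℍ[ℝ]) (a : ℍ[ℝ]) :
    qinner X (op a • Y) = star a * qinner X Y := by
  rw [← star_qinner, qinner_op_smul_left, star_mul, star_qinner]

lemma qinner_sub_left (X Y Z : Matrix (Fin n) (Fin m) ℍ[ℝ]) :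
    qinner (X - Y) Z = qinner X Z - qinner Y Z := by
  simp only [qinner, Matrix.mul_sub, trace_sub]

lemma qinner_sum_left {ι : Type*} (s : Finset ι) (X : ι → Matrix (Fin n) (Fin m) ℍ[ℝ])
    (Y : Matrix (Fin n) (Fin m) ℍ[ℝ]) :
    qinner (∑ i ∈ s, X i) Y = ∑ i ∈ s, qinner (X i) Y := by
  simp only [qinner, Matrix.mul_sum, trace_sum]

lemma qinner_sum_right {ι : Type*} (s : Finset ι) (X : Matrix (Fin n) (Fin m) ℍ[ℝ])
    (Y : ι → Matrix (Fin n) (Fin m) ℍ[ℝ]) :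
    qinner X (∑ i ∈ s, Y i) = ∑ i ∈ s, qinner X (Y i) := by
  rw [← star_qinner, qinner_sum_left, star_sum]
  simp only [star_qinner]

lemma qinner_self (X : Matrix (Fin n) (Fin m) ℍ[ℝ]) :
    qinner X X = ((∑ j, ∑ i, ‖X i j‖ ^ 2 : ℝ) : ℍ[ℝ]) := by
  simp only [qinner, trace, Matrix.diag, mul_apply, conjTranspose_apply, Quaternion.star_mul_self,
    Quaternion.normSq_eq_norm_mul_self, ← sq, ← Quaternion.algebraMap_def, map_sum]

lemma qinner_self_eq_qnorm_sq (X : Matrix (Fin n) (Fin m) ℍ[ℝ]) :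
    qinner X X = ((qnorm X ^ 2 : ℝ) : ℍ[ℝ]) := by
  rw [qnorm, ← qinner, qinner_self, Quaternion.re_coe, Real.sq_sqrt (by positivity)]

lemma qinner_normalize_self {X : Matrix (Fin n) (Fin m) ℍ[ℝ]} (hX : qnorm X ≠ 0) :
    qinner (op ((qnorm X : ℍ[ℝ])⁻¹) • X) (op ((qnorm X : ℍ[ℝ])⁻¹) • X) = 1 := by
  rw [qinner_op_smul_left, qinner_op_smul_right, qinner_self_eq_qnorm_sq, ← Quaternion.coe_inv,
    Quaternion.star_coe, ← Quaternion.coe_mul, ← Quaternion.coe_mul, ← Quaternion.coe_one]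
  congr 1
  field_simp

def QOrthonormalOn {ι : Type*} [DecidableEq ι] (V : ι → Matrix (Fin n) (Fin m) ℍ[ℝ])
    (s : Finset ι) : Prop :=
  ∀ i ∈ s, ∀ j ∈ s, qinner (V i) (V j) = if i = j then 1 else 0

namespace QOrthonormalOn

variable {ι : Type*} [DecidableEq ι] {V : ι → Matrix (Fin n) (Fin m) ℍ[ℝ]} {s : Finset ι}

lemma qinner_sum_op_smul_left (hV : QOrthonormalOn V s) (z : ι → ℍ[ℝ]) {l : ι} (hl : l ∈ s) :
    qinner (∑ i ∈ s, op (z i) • V i) (V l) = z l := by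
  rw [qinner_sum_left, sum_eq_single_of_mem l hl, qinner_op_smul_left, hV l hl l hl, if_pos rfl,
    one_mul]
  intro i hi hil
  rw [qinner_op_smul_left, hV i hi l hl, if_neg hil, zero_mul]

lemma qnorm_sum_op_smul_sq (hV : QOrthonormalOn V s) (z : ι → ℍ[ℝ]) :
    qnorm (∑ i ∈ s, op (z i) • V i) ^ 2 = ∑ i ∈ s, ‖z i‖ ^ 2 := by
  apply Quaternion.coe_injective
  rw [← qinner_self_eq_qnorm_sq, qinner_sum_right, ← Quaternion.algebraMap_def, map_sum]
  refine sum_congr rfl fun i hi => ?_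
  rw [qinner_op_smul_right, hV.qinner_sum_op_smul_left z hi, Quaternion.star_mul_self,
    Quaternion.normSq_eq_norm_mul_self, sq]
  rfl

lemma qinner_sub_proj (hV : QOrthonormalOn V s) (X : Matrix (Fin n) (Fin m) ℍ[ℝ]) {l : ι}
    (hl : l ∈ s) : qinner (X - ∑ i ∈ s, op (qinner X (V i)) • V i) (V l) = 0 := by
  rw [qinner_sub_left, hV.qinner_sum_op_smul_left _ hl, sub_self]

lemma insert (hV : QOrthonormalOn V s) {a : ι} (ha : a ∉ s)
    (horth : ∀ l ∈ s, qinner (V a) (V l) = 0) (hnorm : qinner (V a) (V a) = 1) :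
    QOrthonormalOn V (insert a s) := by
  have horth' : ∀ l ∈ s, qinner (V l) (V a) = 0 := fun l hl => by
    rw [← star_qinner, horth l hl, star_zero]
  intro i hi j hj
  rcases Finset.mem_insert.1 hi with rfl | his <;> rcases Finset.mem_insert.1 hj with rfl | hjs
  · rw [hnorm, if_pos rfl]
  · rw [horth j hjs, if_neg (ne_of_mem_of_not_mem hjs ha).symm]
  · rw [horth' i his, if_neg (ne_of_mem_of_not_mem his ha)]
  · exact hV i his j hjs

end QOrthonormalOn

namespace ArnoldiData

variable {k : ℕ} {A : Matrix (Fin n) (Fin n) ℍ[ℝ]} {V : ℕ → Matrix (Fin n) (Fin m) ℍ[ℝ]}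
  {h : ℕ → ℕ → ℍ[ℝ]}

lemma orthonormalOn (hA : ArnoldiData n m k A V h) {j : ℕ} (hj : j ≤ k) :
    QOrthonormalOn V (Icc 1 (j + 1)) := by
  induction j with
  | zero =>
    intro i hi i' hi'
    simp only [zero_add, Icc_self, mem_singleton] at hi hi'
    subst hi hi'
    rw [qinner_self_eq_qnorm_sq, hA.normV1, if_pos rfl, one_pow, Quaternion.coe_one]
  | succ j ih =>
    have hV := ih (by omega)
    have hj' : j + 1 ∈ Icc 1 k := mem_Icc.2 ⟨by omega, hj⟩
    have hW : A * V (j + 1) - ∑ i ∈ Icc 1 (j + 1), qsmul (V i) (h i (j + 1)) =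
        A * V (j + 1) - ∑ i ∈ Icc 1 (j + 1), op (qinner (A * V (j + 1)) (V i)) • V i := by
      refine congrArg _ (sum_congr rfl fun i hi => ?_)
      rw [hA.hdef _ hj' i hi]
      rfl
    have hWne := hA.hsub_ne _ hj'
    rw [hA.hsub _ hj', hW, Ne, ← Quaternion.coe_zero, Quaternion.coe_injective.eq_iff] at hWne
    rw [← insert_Icc_right_eq_Icc_add_one (by omega)]
    refine hV.insert (by simp) (fun l hl => ?_) ?_
    · rw [hA.vdef _ hj', qsmul_eq_op_smul, qinner_op_smul_left, hW, hV.qinner_sub_proj _ hl,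
        zero_mul]
    · rw [hA.vdef _ hj', hA.hsub _ hj', hW, qsmul_eq_op_smul]
      exact qinner_normalize_self hWne

lemma mul_V_eq (hA : ArnoldiData n m k A V h) (hzero : ∀ i j : ℕ, j + 1 < i → h i j = 0)
    {j : ℕ} (hj : j ∈ Icc 1 k) : A * V j = ∑ i ∈ Icc 1 (k + 1), op (h i j) • V i := by
  have hj' := mem_Icc.1 hj
  have hstep : A * V j = ∑ i ∈ Icc 1 (j + 1), op (h i j) • V i := by
    rw [sum_Icc_succ_top (by omega), hA.vdef j hj, qsmul_eq_op_smul, smul_smul, ← op_mul,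
      inv_mul_cancel₀ (hA.hsub_ne j hj), op_one, one_smul]
    simp only [qsmul_eq_op_smul]
    abel
  rw [hstep]
  refine sum_subset (Icc_subset_Icc_right (by omega)) fun i hi hij => ?_
  simp only [mem_Icc, not_and, not_le] at hi hij
  rw [hzero i j (hij hi.1), op_zero, zero_smul]

lemma residual_eq (hA : ArnoldiData n m k A V h)
    (hzero : ∀ i j : ℕ, j + 1 < i → h i j = 0) {B X₀ : Matrix (Fin n) (Fin m) ℍ[ℝ]} {β : ℍ[ℝ]}
    (hR₀ : B - A * X₀ = op β • V 1) (y : ℕ → ℍ[ℝ]) :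
    B - A * (X₀ + ∑ j ∈ Icc 1 k, op (y j) • V j) =
      ∑ i ∈ Icc 1 (k + 1), op ((if i = 1 then β else 0) - ∑ j ∈ Icc 1 k, h i j * y j) • V i := by
  have hβe₁ : ∑ i ∈ Icc 1 (k + 1), op (if i = 1 then β else 0) • V i = op β • V 1 := by
    simp only [apply_ite op, op_zero, ite_smul, zero_smul]
    rw [sum_ite_eq', if_pos (mem_Icc.2 ⟨le_rfl, by omega⟩)]
  have hAy : ∀ j ∈ Icc 1 k,
      A * (op (y j) • V j) = ∑ i ∈ Icc 1 (k + 1), op (h i j * y j) • V i := by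
    intro j hj
    rw [Matrix.mul_smul, hA.mul_V_eq hzero hj, smul_sum]
    simp only [op_mul, mul_smul]
  simp only [op_sub, sub_smul, sum_sub_distrib, hβe₁, op_sum, sum_smul]
  rw [sum_comm, ← sum_congr rfl hAy, ← Matrix.mul_sum, ← hR₀, Matrix.mul_add]
  abel

end ArnoldiData

end

theorem glqgmres_least_squares_reduction_general (n m k : ℕ)
    (A : Matrix (Fin n) (Fin n) ℍ[ℝ]) (B X₀ : Matrix (Fin n) (Fin m) ℍ[ℝ])
    (R₀ : Matrix (Fin n) (Fin m) ℍ[ℝ]) (hR₀ : R₀ = B - A * X₀)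
    (β : ℝ)
    (V : ℕ → Matrix (Fin n) (Fin m) ℍ[ℝ]) (hV1 : V 1 = qsmul R₀ ((β : ℍ[ℝ])⁻¹))
    (h : ℕ → ℕ → ℍ[ℝ]) (hA : ArnoldiData n m k A V h)
    (hzero : ∀ i j : ℕ, j + 1 < i → h i j = 0) :
    ∀ y : ℕ → ℍ[ℝ],
      qnorm (B - A * (X₀ + ∑ j ∈ Finset.Icc 1 k, qsmul (V j) (y j))) ^ 2 =
      ∑ i ∈ Finset.Icc 1 (k + 1),
        ‖(if i = 1 then (β : ℍ[ℝ]) else 0) - ∑ j ∈ Finset.Icc 1 k, h i j * y j‖ ^ 2 := by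
  intro y
  have hβ : (β : ℍ[ℝ]) ≠ 0 := by
    intro hβ0
    have hV1norm := hA.normV1
    simp [hV1, hβ0, qsmul_eq_op_smul, qnorm] at hV1norm
  have hR₀V : B - A * X₀ = op (β : ℍ[ℝ]) • V 1 := by
    rw [hV1, qsmul_eq_op_smul, smul_smul, ← op_mul, inv_mul_cancel₀ hβ, op_one, one_smul, hR₀]
  simp only [qsmul_eq_op_smul]
  rw [hA.residual_eq hzero hR₀V, (hA.orthonormalOn le_rfl).qnorm_sum_op_smul_sq]

/-- Reduction of the Gl-QGMRES minimization to a small least-squares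
problem: with `R₀ = B − A X₀`, `β = ‖R₀‖ > 0`, `V₁ = R₀ β⁻¹`, the Arnoldi hypotheses
through step `k` and `h i j = 0` for `i > j+1`, for every `y ∈ ℍ^k`,
`‖B − A(X₀ + Σ_{j=1}^k V_j y_j)‖² = Σ_{i=1}^{k+1} |β δ_{i1} − Σ_{j=1}^k h_{i,j} y_j|²`,
i.e. `‖B − A(X₀ + 𝒱_k * y)‖ = ‖β ē₁ − H̄_k y‖`. -/
theorem glqgmres_least_squares_reduction (n m k : ℕ)
    (A : Matrix (Fin n) (Fin n) ℍ[ℝ]) (B X₀ : Matrix (Fin n) (Fin m) ℍ[ℝ])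
    (R₀ : Matrix (Fin n) (Fin m) ℍ[ℝ]) (hR₀ : R₀ = B - A * X₀)
    (β : ℝ) (hβ : β = qnorm R₀) (hβpos : 0 < β)
    (V : ℕ → Matrix (Fin n) (Fin m) ℍ[ℝ]) (hV1 : V 1 = qsmul R₀ ((β : ℍ[ℝ])⁻¹))
    (h : ℕ → ℕ → ℍ[ℝ]) (hA : ArnoldiData n m k A V h)
    (hzero : ∀ i j : ℕ, j + 1 < i → h i j = 0) :
    ∀ y : ℕ → ℍ[ℝ],
      qnorm (B - A * (X₀ + ∑ j ∈ Finset.Icc 1 k, qsmul (V j) (y j))) ^ 2 =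
      ∑ i ∈ Finset.Icc 1 (k + 1),
        ‖(if i = 1 then (β : ℍ[ℝ]) else 0) - ∑ j ∈ Finset.Icc 1 k, h i j * y j‖ ^ 2 :=
  glqgmres_least_squares_reduction_general n m k A B X₀ R₀ hR₀ β V hV1 h hA hzero
end
end

section
/- (Generalized quaternion Givens rotation.) Let h₁, h₂ ∈ ℍ with h₂ ≠ 0 and |h₁| ≤ |h₂|. Set r := (|h₁|² + |h₂|²)^{1/2}, g₁₁ := h₁ r^{-1}, g₂₁ := h₂ r^{-1}, g₁₂ := |g₂₁| (a positive real), and g₂₂ := −(g₂₁ |g₂₁|^{-1}) ḡ₁₁ (where ḡ₁₁ is the quaternion conjugate of g₁₁). Then the 2×2 quaternion matrix G = [g₁₁, g₁₂; g₂₁, g₂₂] is unitary, i.e. G^* G = I₂, and G^* (h₁, h₂)^T = (r, 0)^T. -/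
open Matrix Quaternion

noncomputable section

/-! The first column of `G` is `(h₁, h₂)ᵀ / r`, a unit vector. With `w = g₂₁ / |g₂₁|` a unit
quaternion, `w̄ g₂₁ = |g₂₁|` is real, hence central, and this makes the second column
`(|g₂₁|, -w ḡ₁₁)ᵀ` a unit vector orthogonal to the first; so `G^* G = I`. Finally
`(h₁, h₂)ᵀ = G (r, 0)ᵀ`, whence `G^* (h₁, h₂)ᵀ = G^* G (r, 0)ᵀ = (r, 0)ᵀ`. -/

theorem Matrix.conjTranspose_mul_self_fin_two {α : Type*} [NonUnitalNonAssocSemiring α]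
    [StarRing α] (a b c d : α) :
    (!![a, b; c, d])ᴴ * !![a, b; c, d] =
      !![star a * a + star c * c, star a * b + star c * d;
        star b * a + star d * c, star b * b + star d * d] := by
  ext i j
  fin_cases i <;> fin_cases j <;> simp [mul_apply]

namespace Quaternion

theorem star_mul_self_eq_coe_norm_sq (a : ℍ[ℝ]) : star a * a = ((‖a‖ ^ 2 : ℝ) : ℍ[ℝ]) := by
  rw [star_mul_self, normSq_eq_norm_mul_self, sq]

theorem self_mul_star_eq_coe_norm_sq (a : ℍ[ℝ]) : a * star a = ((‖a‖ ^ 2 : ℝ) : ℍ[ℝ]) := by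
  rw [self_mul_star, normSq_eq_norm_mul_self, sq]

theorem norm_sq_add_norm_sq_mul_inv_sqrt {h₁ h₂ : ℍ[ℝ]} {r : ℝ}
    (hr : r = √(‖h₁‖ ^ 2 + ‖h₂‖ ^ 2)) (hr₀ : r ≠ 0) :
    ‖h₁ * (r : ℍ[ℝ])⁻¹‖ ^ 2 + ‖h₂ * (r : ℍ[ℝ])⁻¹‖ ^ 2 = 1 := by
  have hr_sq : r ^ 2 = ‖h₁‖ ^ 2 + ‖h₂‖ ^ 2 := by rw [hr, Real.sq_sqrt (by positivity)]
  rw [norm_mul, norm_mul, norm_inv, norm_coe, mul_pow, mul_pow, ← add_mul, ← hr_sq, inv_pow,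
    Real.norm_eq_abs, sq_abs, mul_inv_cancel₀ (pow_ne_zero 2 hr₀)]

theorem star_mul_mul_inv_norm {v : ℍ[ℝ]} (hv : v ≠ 0) :
    star v * (v * ((‖v‖ : ℝ) : ℍ[ℝ])⁻¹) = ((‖v‖ : ℝ) : ℍ[ℝ]) := by
  have : ‖v‖ ≠ 0 := norm_ne_zero_iff.mpr hv
  rw [← mul_assoc, star_mul_self_eq_coe_norm_sq, ← coe_inv, ← coe_mul]
  congr 1
  field_simp

end Quaternion

def givensMatrix (u v : ℍ[ℝ]) : Matrix (Fin 2) (Fin 2) ℍ[ℝ] :=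
  !![u, ((‖v‖ : ℝ) : ℍ[ℝ]); v, -(v * ((‖v‖ : ℝ) : ℍ[ℝ])⁻¹) * star u]

section givensMatrix

variable {u v : ℍ[ℝ]}

theorem givensMatrix_conjTranspose_mul_self (hv : v ≠ 0) (huv : ‖u‖ ^ 2 + ‖v‖ ^ 2 = 1) :
    (givensMatrix u v)ᴴ * givensMatrix u v = 1 := by
  set n : ℍ[ℝ] := ((‖v‖ : ℝ) : ℍ[ℝ])
  set w := v * n⁻¹
  have hvw : star v * w = n := star_mul_mul_inv_norm hv
  have hwv : star w * v = n := by rw [← star_star v, ← star_mul, hvw, star_coe]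
  have hww : star w * w = 1 := by
    rw [← mul_assoc, hwv, ← coe_inv, ← coe_mul, mul_inv_cancel₀ (norm_ne_zero_iff.mpr hv), coe_one]
  have e00 : star u * u + star v * v = 1 := by
    rw [star_mul_self_eq_coe_norm_sq, star_mul_self_eq_coe_norm_sq, ← coe_add, huv, coe_one]
  have e01 : star u * n + star v * (-w * star u) = 0 := by
    rw [neg_mul, mul_neg, ← mul_assoc, hvw, coe_commutes, add_neg_cancel]
  have e10 : star n * u + star (-w * star u) * v = 0 := by
    rw [star_mul, star_neg, star_star, mul_neg, neg_mul, mul_assoc, hwv, star_coe, coe_commutes,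
      add_neg_cancel]
  have e11 : star n * n + star (-w * star u) * (-w * star u) = 1 := by
    rw [star_coe, ← coe_mul, neg_mul, star_neg, star_mul, star_star, neg_mul_neg, mul_assoc u,
      ← mul_assoc (star w), hww, one_mul, self_mul_star_eq_coe_norm_sq, ← coe_add, ← coe_one]
    congr 1
    linear_combination huv
  rw [givensMatrix, conjTranspose_mul_self_fin_two, e00, e01, e10, e11, one_fin_two]

theorem givensMatrix_mulVec (r : ℝ) :
    givensMatrix u v *ᵥ ![(r : ℍ[ℝ]), 0] = ![u * r, v * r] := by
  funext i; fin_cases i <;> simp [givensMatrix, mulVec, dotProduct]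

end givensMatrix

theorem generalized_quaternion_givens_general (h₁ h₂ : ℍ[ℝ]) (hh₂ : h₂ ≠ 0)
    (r : ℝ) (hr : r = Real.sqrt (‖h₁‖ ^ 2 + ‖h₂‖ ^ 2))
    (g₁₁ g₂₁ g₁₂ g₂₂ : ℍ[ℝ])
    (hg₁₁ : g₁₁ = h₁ * ((r : ℍ[ℝ]))⁻¹)
    (hg₂₁ : g₂₁ = h₂ * ((r : ℍ[ℝ]))⁻¹)
    (hg₁₂ : g₁₂ = ((‖g₂₁‖ : ℝ) : ℍ[ℝ]))
    (hg₂₂ : g₂₂ = -(g₂₁ * ((‖g₂₁‖ : ℝ) : ℍ[ℝ])⁻¹) * star g₁₁)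
    (G : Matrix (Fin 2) (Fin 2) ℍ[ℝ]) (hG : G = !![g₁₁, g₁₂; g₂₁, g₂₂]) :
    Gᴴ * G = 1 ∧ Gᴴ *ᵥ ![h₁, h₂] = ![(r : ℍ[ℝ]), 0] := by
  have hr₀ : r ≠ 0 := by rw [hr]; positivity
  have hr₀' : (r : ℍ[ℝ]) ≠ 0 := by rwa [Ne, ← coe_zero, coe_inj]
  have hG' : G = givensMatrix g₁₁ g₂₁ := by rw [hG, hg₁₂, hg₂₂, givensMatrix]
  have hunitary : Gᴴ * G = 1 := by
    rw [hG']
    refine givensMatrix_conjTranspose_mul_self ?_ ?_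
    · rw [hg₂₁]; exact mul_ne_zero hh₂ (inv_ne_zero hr₀')
    · rw [hg₁₁, hg₂₁]; exact norm_sq_add_norm_sq_mul_inv_sqrt hr hr₀
  have hcol : ![h₁, h₂] = G *ᵥ ![(r : ℍ[ℝ]), 0] := by
    rw [hG', givensMatrix_mulVec, hg₁₁, hg₂₁, inv_mul_cancel_right₀ hr₀',
      inv_mul_cancel_right₀ hr₀']
  refine ⟨hunitary, ?_⟩
  rw [hcol, mulVec_mulVec, hunitary, one_mulVec]

/-- Generalized quaternion Givens rotation: for `h₁, h₂ ∈ ℍ` with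
`h₂ ≠ 0` and `|h₁| ≤ |h₂|`, set `r = (|h₁|² + |h₂|²)^{1/2}`, `g₁₁ = h₁ r⁻¹`,
`g₂₁ = h₂ r⁻¹`, `g₁₂ = |g₂₁|` and `g₂₂ = −(g₂₁ |g₂₁|⁻¹) ḡ₁₁`. Then the `2×2` quaternion
matrix `G = [g₁₁, g₁₂; g₂₁, g₂₂]` is unitary and `G^* (h₁, h₂)ᵀ = (r, 0)ᵀ`. -/
theorem generalized_quaternion_givens (h₁ h₂ : ℍ[ℝ]) (hh₂ : h₂ ≠ 0)
    (hle : ‖h₁‖ ≤ ‖h₂‖)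
    (r : ℝ) (hr : r = Real.sqrt (‖h₁‖ ^ 2 + ‖h₂‖ ^ 2))
    (g₁₁ g₂₁ g₁₂ g₂₂ : ℍ[ℝ])
    (hg₁₁ : g₁₁ = h₁ * ((r : ℍ[ℝ]))⁻¹)
    (hg₂₁ : g₂₁ = h₂ * ((r : ℍ[ℝ]))⁻¹)
    (hg₁₂ : g₁₂ = ((‖g₂₁‖ : ℝ) : ℍ[ℝ]))
    (hg₂₂ : g₂₂ = -(g₂₁ * ((‖g₂₁‖ : ℝ) : ℍ[ℝ])⁻¹) * star g₁₁)
    (G : Matrix (Fin 2) (Fin 2) ℍ[ℝ]) (hG : G = !![g₁₁, g₁₂; g₂₁, g₂₂]) :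
    Gᴴ * G = 1 ∧ Gᴴ *ᵥ ![h₁, h₂] = ![(r : ℍ[ℝ]), 0] :=
  generalized_quaternion_givens_general h₁ h₂ hh₂ r hr g₁₁ g₂₁ g₁₂ g₂₂ hg₁₁ hg₂₁ hg₁₂ hg₂₂ G hG
end
end
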